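/- Let λ, σ, τ > 0 be real, p, q complex with Re(p) ≥ 0, Re(q) ≥ 0, η₂, η₃ complex with Re(η₃) > Re(η₂) > 0, and n ∈ ℕ. Then for all complex z, the n-th derivative of z ↦ Φ_{p,q}^{λ;σ,τ}(η₂; η₃; z) satisfies (d^n/dz^n) Φ_{p,q}^{λ;σ,τ}(η₂; η₃; z) = ((η₂)_n / (η₃)_n) · Φ_{p,q}^{λ;σ,τ}(η₂+n; η₃+n; z). -/

import Mathlib

open MeasureTheory Set Complex

/-- The classical Mittag-Leffler function `E_λ(x) = Σ xⁿ / Γ(λn+1)`. -/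
noncomputable def mlE (lam : ℝ) (x : ℂ) : ℂ :=
  ∑' n : ℕ, x ^ n / Complex.Gamma (lam * n + 1)

/-- The extended beta function
`B_{p,q}^{λ;σ,τ}(η₁,η₂) = ∫₀¹ t^{η₁-1}(1-t)^{η₂-1} E_λ(-p/t^σ) E_λ(-q/(1-t)^τ) dt`. -/
noncomputable def extBeta (lam sig tau : ℝ) (p q e1 e2 : ℂ) : ℂ :=
  ∫ t in Ioo (0:ℝ) 1,
    (t : ℂ) ^ (e1 - 1) * (1 - (t : ℂ)) ^ (e2 - 1) *
      mlE lam (-p / (t : ℂ) ^ (sig : ℂ)) * mlE lam (-q / (1 - (t : ℂ)) ^ (tau : ℂ))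

/-- The extended confluent hypergeometric function
`Φ_{p,q}^{λ;σ,τ}(η₂;η₃;z) = Σ (B_{p,q}^{λ;σ,τ}(η₂+n,η₃-η₂)/B(η₂,η₃-η₂)) zⁿ/n!`. -/
noncomputable def extPhi (lam sig tau : ℝ) (p q e2 e3 z : ℂ) : ℂ :=
  ∑' n : ℕ,
    (extBeta lam sig tau p q (e2 + n) (e3 - e2) / Complex.betaIntegral e2 (e3 - e2)) *
    z ^ n / (Nat.factorial n : ℂ)

/-!
`Φ(η₂; η₃; ·)` is the exponential-type series `∑ cₖ zᵏ / k!` with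
`cₖ = B^{λ;σ,τ}_{p,q}(η₂ + k, η₃ - η₂) / B(η₂, η₃ - η₂)`. Since `tᵏ ≤ 1` on `(0, 1)` the
coefficients are bounded, so the series may be differentiated termwise, which shifts `cₖ` to
`cₖ₊₁`. The beta recurrence `B(η₂ + 1, η₃ - η₂) = η₂ / η₃ · B(η₂, η₃ - η₂)` identifies the shifted
series with `η₂ / η₃ · Φ(η₂ + 1; η₃ + 1; ·)`, and induction on `n` gives the Pochhammer quotient.
-/

open scoped Nat

section ExpTypeSeries

variable {𝕜 : Type*} [RCLike 𝕜]

theorem norm_mul_pow_div_factorial_le {c y : 𝕜} {M r : ℝ} (hc : ‖c‖ ≤ M) (hy : ‖y‖ ≤ r)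
    (k : ℕ) : ‖c * y ^ k / (k ! : 𝕜)‖ ≤ M * (r ^ k / k !) := by
  rw [norm_div, norm_mul, norm_pow, RCLike.norm_natCast, mul_div_assoc]
  gcongr
  exact (norm_nonneg c).trans hc

theorem summable_mul_pow_div_factorial_of_norm_le {c : ℕ → 𝕜} {M : ℝ} (hc : ∀ k, ‖c k‖ ≤ M)
    (z : 𝕜) : Summable fun k => c k * z ^ k / (k ! : 𝕜) :=
  .of_norm_bounded ((Real.summable_pow_div_factorial ‖z‖).mul_left M) fun k =>
    norm_mul_pow_div_factorial_le (hc k) le_rfl k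

theorem hasDerivAt_tsum_mul_pow_div_factorial {c : ℕ → 𝕜} {M : ℝ} (hc : ∀ k, ‖c k‖ ≤ M)
    (z : 𝕜) :
    HasDerivAt (fun w => ∑' k, c k * w ^ k / (k ! : 𝕜))
      (∑' k, c (k + 1) * z ^ k / (k ! : 𝕜)) z := by
  have hsplit : (fun w => ∑' k, c k * w ^ k / (k ! : 𝕜))
      = fun w => c 0 + ∑' k, c (k + 1) * w ^ (k + 1) / ((k + 1)! : 𝕜) := by
    funext w
    rw [(summable_mul_pow_div_factorial_of_norm_le hc w).tsum_eq_zero_add]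
    simp
  have hterm : ∀ k y, HasDerivAt (fun w => c (k + 1) * w ^ (k + 1) / ((k + 1)! : 𝕜))
      (c (k + 1) * y ^ k / (k ! : 𝕜)) y := by
    intro k y
    refine (((hasDerivAt_pow (k + 1) y).const_mul (c (k + 1))).div_const
      ((k + 1)! : 𝕜)).congr_deriv ?_
    rw [Nat.factorial_succ]
    push_cast
    field_simp
  set R := ‖z‖ + 1
  have hz : z ∈ Metric.ball (0 : 𝕜) R := by simp [R]
  have hbound : ∀ k, ∀ y ∈ Metric.ball (0 : 𝕜) R,
      ‖c (k + 1) * y ^ k / (k ! : 𝕜)‖ ≤ M * (R ^ k / k !) := fun k y hy =>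
    norm_mul_pow_div_factorial_le (hc (k + 1)) (mem_ball_zero_iff.mp hy).le k
  rw [hsplit]
  exact (hasDerivAt_tsum_of_isPreconnected ((Real.summable_pow_div_factorial R).mul_left M)
    Metric.isOpen_ball (convex_ball 0 R).isPreconnected (fun k y _ => hterm k y) hbound hz
    ((summable_mul_pow_div_factorial_of_norm_le hc z).comp_injective (add_left_injective 1))
    hz).const_add (c 0)

end ExpTypeSeries

theorem norm_setIntegral_Ioo_pow_mul_le {f : ℝ → ℂ} (hf : IntegrableOn f (Ioo 0 1)) (j : ℕ) :
    ‖∫ t in Ioo (0 : ℝ) 1, (t : ℂ) ^ j * f t‖ ≤ ∫ t in Ioo (0 : ℝ) 1, ‖f t‖ := by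
  refine norm_integral_le_of_norm_le hf.norm ?_
  filter_upwards [ae_restrict_mem measurableSet_Ioo] with t ht
  rw [norm_mul, norm_pow, norm_real, Real.norm_of_nonneg ht.1.le]
  exact mul_le_of_le_one_left (norm_nonneg _) (pow_le_one₀ ht.1.le ht.2.le)

/-- Below the first `k` at which the integrand is integrable the integral is the junk value `0`;
from there on `|t ^ j| ≤ 1` on `(0, 1)` bounds it by the first integrable one. -/
theorem exists_bound_norm_setIntegral_cpow_add_natCast_mul (a : ℂ) (F : ℝ → ℂ) :
    ∃ M, ∀ k : ℕ, ‖∫ t in Ioo (0 : ℝ) 1, (t : ℂ) ^ (a + k) * F t‖ ≤ M := by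
  classical
  set G : ℕ → ℝ → ℂ := fun k t => (t : ℂ) ^ (a + k) * F t
  by_cases h : ∃ k, IntegrableOn (G k) (Ioo 0 1)
  swap
  · push Not at h
    exact ⟨0, fun k => by rw [integral_undef (h k), norm_zero]⟩
  refine ⟨∫ t in Ioo (0 : ℝ) 1, ‖G (Nat.find h) t‖, fun k => ?_⟩
  rcases lt_or_ge k (Nat.find h) with hlt | hle
  · rw [integral_undef (Nat.find_min h hlt), norm_zero]
    exact integral_nonneg fun _ => norm_nonneg _
  obtain ⟨j, rfl⟩ := Nat.exists_eq_add_of_le hle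
  have hshift : EqOn (G (Nat.find h + j)) (fun t => (t : ℂ) ^ j * G (Nat.find h) t) (Ioo 0 1) := by
    intro t ht
    simp only [G]
    rw [Nat.cast_add, ← add_assoc, cpow_add _ _ (by exact_mod_cast ht.1.ne'), cpow_natCast]
    ring
  rw [setIntegral_congr_fun measurableSet_Ioo hshift]
  exact norm_setIntegral_Ioo_pow_mul_le (Nat.find_spec h) j

theorem exists_bound_norm_extBeta_add_natCast (lam sig tau : ℝ) (p q a b : ℂ) :
    ∃ M, ∀ k : ℕ, ‖extBeta lam sig tau p q (a + k) b‖ ≤ M := by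
  obtain ⟨M, hM⟩ := exists_bound_norm_setIntegral_cpow_add_natCast_mul (a - 1) fun t =>
    (1 - (t : ℂ)) ^ (b - 1) * mlE lam (-p / (t : ℂ) ^ (sig : ℂ)) *
      mlE lam (-q / (1 - (t : ℂ)) ^ (tau : ℂ))
  refine ⟨M, fun k => le_of_eq_of_le ?_ (hM k)⟩
  unfold extBeta
  simp only [sub_add_eq_add_sub, ← mul_assoc]

theorem Complex.betaIntegral_ne_zero {u v : ℂ} (hu : 0 < u.re) (hv : 0 < v.re) :
    betaIntegral u v ≠ 0 := by
  intro h
  have := Gamma_mul_Gamma_eq_betaIntegral hu hv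
  rw [h, mul_zero] at this
  exact mul_ne_zero (Gamma_ne_zero_of_re_pos hu) (Gamma_ne_zero_of_re_pos hv) this

theorem Complex.betaIntegral_add_one_left {u v : ℂ} (hu : 0 < u.re) (hv : 0 < v.re) :
    betaIntegral (u + 1) v = u / (u + v) * betaIntegral u v := by
  have huv : 0 < (u + v).re := by rw [add_re]; linarith
  have h := Gamma_mul_Gamma_eq_betaIntegral hu hv
  have h1 := Gamma_mul_Gamma_eq_betaIntegral (s := u + 1) (by rw [add_re, one_re]; linarith) hv
  rw [Gamma_add_one u (ne_zero_of_re_pos hu), add_right_comm,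
    Gamma_add_one _ (ne_zero_of_re_pos huv)] at h1
  rw [div_mul_eq_mul_div, eq_div_iff (ne_zero_of_re_pos huv)]
  refine mul_left_cancel₀ (Gamma_ne_zero_of_re_pos huv) ?_
  linear_combination u * h - h1

theorem hasDerivAt_extPhi (lam sig tau : ℝ) (p q : ℂ) {e2 e3 : ℂ} (he2 : 0 < e2.re)
    (he23 : e2.re < e3.re) (z : ℂ) :
    HasDerivAt (extPhi lam sig tau p q e2 e3)
      (e2 / e3 * extPhi lam sig tau p q (e2 + 1) (e3 + 1) z) z := by
  have hv : 0 < (e3 - e2).re := by rw [sub_re]; linarith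
  obtain ⟨M, hM⟩ := exists_bound_norm_extBeta_add_natCast lam sig tau p q e2 (e3 - e2)
  have hcoeff : ∀ k : ℕ, ‖extBeta lam sig tau p q (e2 + k) (e3 - e2) / betaIntegral e2 (e3 - e2)‖
      ≤ M / ‖betaIntegral e2 (e3 - e2)‖ := fun k => by
    rw [norm_div]; gcongr; exact hM k
  refine (hasDerivAt_tsum_mul_pow_div_factorial hcoeff z).congr_deriv ?_
  unfold extPhi
  rw [← tsum_mul_left]
  refine tsum_congr fun k => ?_
  rw [add_sub_add_right_eq_sub, betaIntegral_add_one_left he2 hv, add_sub_cancel,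
    add_right_comm, Nat.cast_add_one, add_assoc]
  have hB := betaIntegral_ne_zero he2 hv
  have he2₀ : e2 ≠ 0 := ne_zero_of_re_pos he2
  have he3₀ : e3 ≠ 0 := ne_zero_of_re_pos (he2.trans he23)
  field_simp

theorem extPhi_iterated_deriv_general (lam sig tau : ℝ) (p q e2 e3 : ℂ)
    (he2 : 0 < e2.re) (he23 : e2.re < e3.re) (n : ℕ) :
    ∀ z : ℂ,
      iteratedDeriv n (fun w => extPhi lam sig tau p q e2 e3 w) z
        = (ascPochhammer ℂ n).eval e2 / (ascPochhammer ℂ n).eval e3 *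
          extPhi lam sig tau p q (e2 + n) (e3 + n) z := by
  induction n generalizing e2 e3 with
  | zero => simp
  | succ n ih =>
    intro z
    have hn2 : 0 < (e2 + n).re := by rw [add_re, natCast_re]; positivity
    have hn23 : (e2 + n).re < (e3 + n).re := by simpa using he23
    have hderiv := (hasDerivAt_extPhi lam sig tau p q hn2 hn23 z).const_mul
      ((ascPochhammer ℂ n).eval e2 / (ascPochhammer ℂ n).eval e3)
    rw [iteratedDeriv_succ, funext (ih e2 e3 he2 he23), hderiv.deriv,
      ascPochhammer_succ_eval, ascPochhammer_succ_eval, Nat.cast_add_one, ← add_assoc,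
      ← add_assoc, ← mul_assoc, div_mul_div_comm]

theorem extPhi_iterated_deriv (lam sig tau : ℝ) (hlam : 0 < lam) (hsig : 0 < sig)
    (htau : 0 < tau) (p q e2 e3 : ℂ) (hp : 0 ≤ p.re) (hq : 0 ≤ q.re)
    (he2 : 0 < e2.re) (he23 : e2.re < e3.re) (n : ℕ) :
    ∀ z : ℂ,
      iteratedDeriv n (fun w => extPhi lam sig tau p q e2 e3 w) z
        = (ascPochhammer ℂ n).eval e2 / (ascPochhammer ℂ n).eval e3 *
          extPhi lam sig tau p q (e2 + n) (e3 + n) z :=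
  extPhi_iterated_deriv_general lam sig tau p q e2 e3 he2 he23 n
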